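/- arXiv:2001.11895 — 6 statements merged into one kernel-verified Lean document; each statement's English description precedes it below -/
import Mathlib

section
/- In a relational monoid, if R(v,x,y) and R(w,x,ℓ y) hold, then ℓ v = ℓ w. -/
/-- Relational associativity. -/
def RelAssoc {X : Type*} (R : X → X → X → Prop) : Prop :=
  ∀ u x y z : X, (∃ v, R u x v ∧ R v y z) ↔ (∃ v, R u v z ∧ R v x y)

/-- Definedness: `D R x y` iff the composite of `x` and `y` exists. -/
def D {X : Type*} (R : X → X → X → Prop) (x y : X) : Prop := ∃ z, R z x y

/-- Relational left unit. -/
def IsLUnit {X : Type*} (R : X → X → X → Prop) (e : X) : Prop :=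
  (∃ x, R x e x) ∧ ∀ x y, R y e x → y = x

/-- Relational right unit. -/
def IsRUnit {X : Type*} (R : X → X → X → Prop) (e : X) : Prop :=
  (∃ x, R x x e) ∧ ∀ x y, R y x e → y = x

/-- Relational unit: a left or a right unit. -/
def IsUnit' {X : Type*} (R : X → X → X → Prop) (e : X) : Prop :=
  IsLUnit R e ∨ IsRUnit R e

/-- Relational monoid: relationally associative, and every element has a left
unit composable on the left and a right unit composable on the right. -/
def RelMonoid {X : Type*} (R : X → X → X → Prop) : Prop :=
  RelAssoc R ∧ ∀ x, (∃ e, IsLUnit R e ∧ D R e x) ∧ (∃ e, IsRUnit R e ∧ D R x e)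

/-- Coherence. -/
def Coherent {X : Type*} (R : X → X → X → Prop) : Prop :=
  ∀ v x y z, R v x y → D R y z → D R v z

/-- Weak functionality: `R` is a partial operation. -/
def WFun {X : Type*} (R : X → X → X → Prop) : Prop :=
  ∀ x x' y z, R x y z → R x' y z → x = x'

/-
A one-sided unit of a relational monoid is two-sided, and by associativity a left and a right
unit fixing the same element coincide; so `l a` is the only unit fixing `a`. From `R v x y` and
`R x (l x) x`, associativity gives `t` with `R v (l x) t` and `R t x y`; as `l x` is a left unit,
`t = v`. Thus `l x` fixes `v`, so `l v = l x`, and likewise `l w = l x`.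
-/

section

variable {X : Type*} {R : X → X → X → Prop}

namespace RelMonoid

theorem isRUnit_of_isLUnit (hM : RelMonoid R) {e : X} (he : IsLUnit R e) : IsRUnit R e := by
  obtain ⟨f, hf, z, hz⟩ := (hM.2 e).2
  have hz' : R e e f := hf.2 _ _ hz ▸ hz
  exact he.2 f e hz' ▸ hf

theorem isLUnit_of_isRUnit (hM : RelMonoid R) {e : X} (he : IsRUnit R e) : IsLUnit R e := by
  obtain ⟨f, hf, z, hz⟩ := (hM.2 e).1
  have hz' : R e f e := hf.2 _ _ hz ▸ hz
  exact he.2 f e hz' ▸ hf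

theorem isLUnit_of_isUnit' (hM : RelMonoid R) {e : X} (he : IsUnit' R e) : IsLUnit R e :=
  he.elim id hM.isLUnit_of_isRUnit

theorem isRUnit_of_isUnit' (hM : RelMonoid R) {e : X} (he : IsUnit' R e) : IsRUnit R e :=
  he.elim hM.isRUnit_of_isLUnit id

end RelMonoid

namespace RelAssoc

theorem eq_of_isLUnit_of_isRUnit (hA : RelAssoc R) {a e f : X} (he : IsLUnit R e)
    (hf : IsRUnit R f) (hae : R a e a) (haf : R a f a) : e = f := by
  obtain ⟨s, -, hs⟩ := (hA a e f a).1 ⟨a, hae, haf⟩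
  have hs' : R f e f := he.2 f s hs ▸ hs
  exact (hf.2 e f hs').symm

theorem rel_unit_of_rel (hA : RelAssoc R) {e v x y : X} (he : IsLUnit R e) (hx : R x e x)
    (hv : R v x y) : R v e v := by
  obtain ⟨t, hvt, -⟩ := (hA v e x y).2 ⟨x, hv, hx⟩
  exact he.2 t v hvt ▸ hvt

end RelAssoc

theorem RelMonoid.eq_of_isUnit' (hM : RelMonoid R) {a e f : X} (he : IsUnit' R e)
    (hf : IsUnit' R f) (hae : R a e a) (haf : R a f a) : e = f :=
  hM.1.eq_of_isLUnit_of_isRUnit (hM.isLUnit_of_isUnit' he) (hM.isRUnit_of_isUnit' hf) hae haf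

end

theorem stmt6_general {X : Type*} (R : X → X → X → Prop) (hM : RelMonoid R)
    (l : X → X)
    (hl : ∀ x, IsUnit' R (l x) ∧ R x (l x) x) :
    ∀ v w x y : X, R v x y → R w x (l y) → l v = l w := by
  intro v w x y hv hw
  have hlx : IsLUnit R (l x) := hM.isLUnit_of_isUnit' (hl x).1
  have hlv : l v = l x := hM.eq_of_isUnit' (hl v).1 (hl x).1 (hl v).2
    (hM.1.rel_unit_of_rel hlx (hl x).2 hv)
  have hlw : l w = l x := hM.eq_of_isUnit' (hl w).1 (hl x).1 (hl w).2
    (hM.1.rel_unit_of_rel hlx (hl x).2 hw)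
  rw [hlv, hlw]

theorem stmt6 {X : Type*} (R : X → X → X → Prop) (hM : RelMonoid R)
    (l r : X → X)
    (hl : ∀ x, IsUnit' R (l x) ∧ R x (l x) x)
    (hr : ∀ x, IsUnit' R (r x) ∧ R x x (r x)) :
    ∀ v w x y : X, R v x y → R w x (l y) → l v = l w :=
  stmt6_general R hM l hl
end

section
/- In a relational monoid, if R(u,x,y) holds, then R(v, r x, y) holds if and only if R(v, y, r u) holds. -/
/-!
In a relational monoid every unit is both a left and a right unit, since it is absorbed by the
unit composable with it. Reading `R a b c` as `a = b c`: if `u = x y`, associativity rewrites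
`u = u (r u)` as `y = y (r u)` and `x = x (r x)` as `y = (r x) y`; as `r x` and `r u` are
units, each side of the equivalence forces `v = y`.
-/

section

variable {X : Type*} {R : X → X → X → Prop} {e f u x y : X}

theorem IsRUnit.eq_of_isLUnit (he : IsRUnit R e) (hf : IsLUnit R f) (hfe : D R f e) :
    e = f := by
  obtain ⟨z, hz⟩ := hfe
  obtain rfl : z = e := hf.2 e z hz
  exact he.2 f z hz

theorem IsLUnit.eq_of_isRUnit (he : IsLUnit R e) (hf : IsRUnit R f) (hef : D R e f) :
    e = f := by
  obtain ⟨z, hz⟩ := hef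
  obtain rfl : z = e := hf.2 e z hz
  exact he.2 f z hz

theorem RelMonoid.isLUnit_and_isRUnit (hM : RelMonoid R) (he : IsUnit' R e) :
    IsLUnit R e ∧ IsRUnit R e := by
  rcases he with he | he
  · obtain ⟨f, hf, hef⟩ := (hM.2 e).2
    obtain rfl := he.eq_of_isRUnit hf hef
    exact ⟨he, hf⟩
  · obtain ⟨f, hf, hfe⟩ := (hM.2 e).1
    obtain rfl := he.eq_of_isLUnit hf hfe
    exact ⟨hf, he⟩

theorem RelAssoc.rel_self_isRUnit (hA : RelAssoc R) (he : IsRUnit R e) (hu : R u u e)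
    (h : R u x y) : R y y e := by
  obtain ⟨w, -, hw⟩ := (hA u x y e).2 ⟨u, hu, h⟩
  obtain rfl := he.2 y w hw
  exact hw

theorem RelAssoc.rel_isLUnit_self (hA : RelAssoc R) (he : IsLUnit R e) (hx : R x x e)
    (h : R u x y) : R y e y := by
  obtain ⟨w, -, hw⟩ := (hA u x e y).2 ⟨x, h, hx⟩
  obtain rfl := he.2 y w hw
  exact hw

end

theorem stmt8_general {X : Type*} (R : X → X → X → Prop) (hM : RelMonoid R)
    (r : X → X)
    (hr : ∀ x, IsUnit' R (r x) ∧ R x x (r x)) :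
    ∀ u v x y : X, R u x y → (R v (r x) y ↔ R v y (r u)) := by
  intro u v x y h
  have hrx := (hM.isLUnit_and_isRUnit (hr x).1).1
  have hru := (hM.isLUnit_and_isRUnit (hr u).1).2
  constructor
  · intro hv
    obtain rfl := hrx.2 y v hv
    exact hM.1.rel_self_isRUnit hru (hr u).2 h
  · intro hv
    obtain rfl := hru.2 y v hv
    exact hM.1.rel_isLUnit_self hrx (hr x).2 h

theorem stmt8 {X : Type*} (R : X → X → X → Prop) (hM : RelMonoid R)
    (l r : X → X)
    (hl : ∀ x, IsUnit' R (l x) ∧ R x (l x) x)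
    (hr : ∀ x, IsUnit' R (r x) ∧ R x x (r x)) :
    ∀ u v x y : X, R u x y → (R v (r x) y ↔ R v y (r u)) :=
  stmt8_general R hM r hr
end

section
/- A relational monoid (X,R) is coherent if and only if for all x, y and every unit e, D(x,e) and D(e,y) imply D(x,y). -/
section

variable {X : Type*} {R : X → X → X → Prop} {e x y z : X}

theorem IsRUnit.rel_self_of_D (he : IsRUnit R e) (hxe : D R x e) : R x x e := by
  obtain ⟨w, hw⟩ := hxe
  exact he.2 _ _ hw ▸ hw

theorem RelAssoc.D_of_rel_of_D (hA : RelAssoc R) {w : X} (hy : R y w e)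
    (hyz : D R y z) : D R e z := by
  obtain ⟨u, hu⟩ := hyz
  obtain ⟨_, -, h⟩ := (hA u w e z).mpr ⟨y, hu, hy⟩
  exact ⟨_, h⟩

theorem RelAssoc.D_of_rel_of_D_isRUnit (hA : RelAssoc R) (he : IsRUnit R e) {v : X}
    (hv : R v x y) (hye : D R y e) : D R v e := by
  obtain ⟨w, hvw, -⟩ := (hA v x y e).mp ⟨y, hv, he.rel_self_of_D hye⟩
  exact ⟨v, he.2 _ _ hvw ▸ hvw⟩

theorem Coherent.D_of_isRUnit (hC : Coherent R) (he : IsRUnit R e) (hxe : D R x e)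
    (hey : D R e y) : D R x y := by
  obtain ⟨v, hv⟩ := hxe
  exact he.2 _ _ hv ▸ hC v x e y hv hey

theorem Coherent.D_of_isLUnit (hC : Coherent R) (hA : RelAssoc R) (he : IsLUnit R e)
    (hxe : D R x e) (hey : D R e y) : D R x y := by
  obtain ⟨v, hv⟩ := hxe
  obtain ⟨u, hu⟩ := hC v x e y hv hey
  -- regrouping `(x e) y` as `x (e y)` forces the inner composite `e y` to be `y`
  obtain ⟨w, hxw, hwy⟩ := (hA u x e y).mpr ⟨v, hu, hv⟩
  exact ⟨u, he.2 _ _ hwy ▸ hxw⟩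

theorem Coherent.D_of_isUnit' (hC : Coherent R) (hA : RelAssoc R) (he : IsUnit' R e)
    (hxe : D R x e) (hey : D R e y) : D R x y :=
  he.elim (hC.D_of_isLUnit hA · hxe hey) (hC.D_of_isRUnit · hxe hey)

end

theorem stmt10 {X : Type*} (R : X → X → X → Prop) (hM : RelMonoid R) :
    Coherent R ↔ ∀ x y e : X, IsUnit' R e → D R x e → D R e y → D R x y := by
  obtain ⟨hA, hU⟩ := hM
  refine ⟨fun hC x y e => hC.D_of_isUnit' hA, fun h v x y z hv hyz => ?_⟩
  -- route the composite through a right unit of `y`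
  obtain ⟨e, he, hye⟩ := (hU y).2
  exact h v z e (.inr he) (hA.D_of_rel_of_D_isRUnit he hv hye)
    (hA.D_of_rel_of_D (he.rel_self_of_D hye) hyz)
end

section
/- Every unit of an object-free category (X,R) becomes a weak unit of the structure (X₀,R₀) obtained by adjoining a zero; hence every object-free category embeds into a weak coherent partial monoid with zero. -/
/-- Adjunction of a zero element to a ternary relation: `none` is the new zero. -/
def Radj {X : Type*} (R : X → X → X → Prop) :
    Option X → Option X → Option X → Prop
  | some z, some x, some y => R z x y
  | some _, _, _ => False
  | none, some x, some y => ¬ D R x y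
  | none, _, _ => True

section WeakUnit

variable {X : Type*} {R : X → X → X → Prop} {e : X}

theorem IsLUnit.exists_radj (he : IsLUnit R e) : ∃ x, Radj R x (some e) x :=
  let ⟨a, ha⟩ := he.1
  ⟨some a, ha⟩

theorem IsLUnit.radj_or_radj_none (he : IsLUnit R e) (x : Option X) :
    Radj R x (some e) x ∨ Radj R none (some e) x := by
  rcases x with _ | x
  · exact Or.inr trivial
  · by_cases hex : D R e x
    · obtain ⟨y, hy⟩ := hex
      exact Or.inl (he.2 x y hy ▸ hy)
    · exact Or.inr hex

theorem IsRUnit.exists_radj (he : IsRUnit R e) : ∃ x, Radj R x x (some e) :=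
  let ⟨a, ha⟩ := he.1
  ⟨some a, ha⟩

theorem IsRUnit.radj_or_radj_none (he : IsRUnit R e) (x : Option X) :
    Radj R x x (some e) ∨ Radj R none x (some e) := by
  rcases x with _ | x
  · exact Or.inr trivial
  · by_cases hxe : D R x e
    · obtain ⟨y, hy⟩ := hxe
      exact Or.inl (he.2 x y hy ▸ hy)
    · exact Or.inr hxe

end WeakUnit

theorem stmt17_general {X : Type*} (R : X → X → X → Prop) (e : X) :
    (IsLUnit R e →
      (∃ x : Option X, Radj R x (some e) x) ∧
      ∀ x : Option X, Radj R x (some e) x ∨ Radj R none (some e) x) ∧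
    (IsRUnit R e →
      (∃ x : Option X, Radj R x x (some e)) ∧
      ∀ x : Option X, Radj R x x (some e) ∨ Radj R none x (some e)) :=
  ⟨fun he => ⟨he.exists_radj, he.radj_or_radj_none⟩,
    fun he => ⟨he.exists_radj, he.radj_or_radj_none⟩⟩

theorem stmt17 {X : Type*} (R : X → X → X → Prop) (hM : RelMonoid R)
    (hF : WFun R) (hC : Coherent R) (e : X) :
    (IsLUnit R e →
      (∃ x : Option X, Radj R x (some e) x) ∧
      ∀ x : Option X, Radj R x (some e) x ∨ Radj R none (some e) x) ∧
    (IsRUnit R e →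
      (∃ x : Option X, Radj R x x (some e)) ∧
      ∀ x : Option X, Radj R x x (some e) ∨ Radj R none x (some e)) :=
  stmt17_general R e
end

section
/- If e is a weak left unit of a weak coherent partial monoid with zero (X₀,R₀) and e ≠ 0, then e is a relational left unit of the restricted structure (X,R) where X = X₀ \ {0}; hence the nonzero elements form an object-free category. -/
/-- Weak left unit of a relation with zero `z0`. -/
def WeakLUnit {X : Type*} (R : X → X → X → Prop) (z0 e : X) : Prop :=
  (∃ x, R x e x) ∧ ∀ x, R x e x ∨ R z0 e x

/-- Weak right unit of a relation with zero `z0`. -/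
def WeakRUnit {X : Type*} (R : X → X → X → Prop) (z0 e : X) : Prop :=
  (∃ x, R x x e) ∧ ∀ x, R x x e ∨ R z0 x e

/-! If `R₀ y e x` with `y ≠ 0`, weak functionality rules out the alternative `R₀ 0 e x` in the
definition of a weak left unit, so `R₀ x e x` holds and forces `y = x`. Applied to a composite
`R₀ e e f` (which exists since `e` has a weak right unit `f`), this gives `e = f`, so `R₀ e e e`. -/

namespace WeakLUnit

variable {X : Type*} {R : X → X → X → Prop} {z0 e : X}

theorem eq_of_rel (hF : WFun R) (hwe : WeakLUnit R z0 e) {x y : X} (hy : y ≠ z0)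
    (h : R y e x) : y = x :=
  (hwe.2 x).elim (hF _ _ _ _ h) fun h0 => absurd (hF _ _ _ _ h h0) hy

theorem rel_self_of_rel (hF : WFun R) (hwe : WeakLUnit R z0 e) (he : e ≠ z0) {f : X}
    (hef : R e e f) : R e e e := by
  obtain rfl := hwe.eq_of_rel hF he hef
  exact hef

theorem isLUnit_subtype_ne (hF : WFun R) (hwe : WeakLUnit R z0 e) (he : e ≠ z0)
    (hee : R e e e) :
    IsLUnit (fun a b c : {x : X // x ≠ z0} => R a.1 b.1 c.1) ⟨e, he⟩ :=
  ⟨⟨⟨e, he⟩, hee⟩, fun _ y h => Subtype.ext (hwe.eq_of_rel hF y.2 h)⟩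

end WeakLUnit

theorem stmt18_general {X₀ : Type*} (R₀ : X₀ → X₀ → X₀ → Prop) (z0 : X₀)
    (hF : WFun R₀)
    (hu : ∀ x, (∃ e, WeakLUnit R₀ z0 e ∧ R₀ x e x) ∧
               (∃ e, WeakRUnit R₀ z0 e ∧ R₀ x x e))
    (e : X₀) (he : e ≠ z0) (hwe : WeakLUnit R₀ z0 e) :
    IsLUnit (fun a b c : {x : X₀ // x ≠ z0} => R₀ a.1 b.1 c.1) ⟨e, he⟩ := by
  obtain ⟨f, -, hef⟩ := (hu e).2
  exact hwe.isLUnit_subtype_ne hF he (hwe.rel_self_of_rel hF he hef)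

theorem stmt18 {X₀ : Type*} (R₀ : X₀ → X₀ → X₀ → Prop) (z0 : X₀)
    (hassoc : RelAssoc R₀) (hF : WFun R₀) (hC : Coherent R₀)
    (hz : ∀ x, R₀ z0 z0 x ∧ R₀ z0 x z0)
    (hu : ∀ x, (∃ e, WeakLUnit R₀ z0 e ∧ R₀ x e x) ∧
               (∃ e, WeakRUnit R₀ z0 e ∧ R₀ x x e))
    (e : X₀) (he : e ≠ z0) (hwe : WeakLUnit R₀ z0 e) :
    IsLUnit (fun a b c : {x : X₀ // x ≠ z0} => R₀ a.1 b.1 c.1) ⟨e, he⟩ :=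
  stmt18_general R₀ z0 hF hu e he hwe
end

section
/- Every categorical semigroup S is totalization-compatible with an ℓr-category structure: S \ {0} with composition restricted to pairs with x·y ≠ 0 and the restricted maps ℓ, r satisfies the ℓr-category axioms, with D(x,y) ↔ r x = ℓ y. -/
section CategoricalSemigroup

variable {S : Type*} [Semigroup S] {z : S} {l r : S → S}

theorem l_ne_of_ne (hl : ∀ x : S, l x * x = x)
    (hmul : ∀ x y : S, x * y ≠ z ↔ x ≠ z ∧ y ≠ z ∧ r x = l y) {x : S} (hx : x ≠ z) :
    l x ≠ z :=
  ((hmul _ _).1 (by rwa [hl])).1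

theorem r_ne_of_ne (hr : ∀ x : S, x * r x = x)
    (hmul : ∀ x y : S, x * y ≠ z ↔ x ≠ z ∧ y ≠ z ∧ r x = l y) {x : S} (hx : x ≠ z) :
    r x ≠ z :=
  ((hmul _ _).1 (by rwa [hr])).2.1

theorem l_mul_of_mul_ne (hrl : ∀ x : S, r (l x) = l x) (hl : ∀ x : S, l x * x = x)
    (hmul : ∀ x y : S, x * y ≠ z ↔ x ≠ z ∧ y ≠ z ∧ r x = l y) {x y : S} (hxy : x * y ≠ z) :
    l (x * y) = l x := by
  have hne : l x * (x * y) ≠ z := by rwa [← mul_assoc, hl]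
  rw [← hrl x]
  exact ((hmul _ _).1 hne).2.2.symm

theorem r_mul_of_mul_ne (hlr : ∀ x : S, l (r x) = r x) (hr : ∀ x : S, x * r x = x)
    (hmul : ∀ x y : S, x * y ≠ z ↔ x ≠ z ∧ y ≠ z ∧ r x = l y) {x y : S} (hxy : x * y ≠ z) :
    r (x * y) = r y := by
  have hne : x * y * r y ≠ z := by rwa [mul_assoc, hr]
  rw [← hlr y]
  exact ((hmul _ _).1 hne).2.2

end CategoricalSemigroup

theorem stmt19_general {S : Type*} [Semigroup S] (z : S) (l r : S → S)
    (h1 : ∀ x : S, r (l x) = l x) (h2 : ∀ x : S, l (r x) = r x)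
    (h3 : ∀ x : S, l x * x = x) (h4 : ∀ x : S, x * r x = x)
    (h6 : ∀ x y : S, x * y ≠ z ↔ x ≠ z ∧ y ≠ z ∧ r x = l y) :
    (∀ x : S, x ≠ z →
      l x ≠ z ∧ r x ≠ z ∧ r (l x) = l x ∧ l (r x) = r x ∧
      l x * x = x ∧ x * r x = x) ∧
    (∀ x y : S, x ≠ z → y ≠ z → (x * y ≠ z ↔ r x = l y)) ∧
    (∀ x y : S, x ≠ z → y ≠ z → r x = l y →
      l (x * y) = l x ∧ r (x * y) = r y) ∧
    (∀ x y w : S, x ≠ z → y ≠ z → w ≠ z → r x = l y → r y = l w →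
      (x * y) * w = x * (y * w)) := by
  refine ⟨fun x hx => ⟨l_ne_of_ne h3 h6 hx, r_ne_of_ne h4 h6 hx, h1 x, h2 x, h3 x, h4 x⟩,
    fun x y hx hy => ⟨fun h => ((h6 x y).1 h).2.2, fun h => (h6 x y).2 ⟨hx, hy, h⟩⟩,
    fun x y hx hy hd => ?_, fun x y w _ _ _ _ _ => mul_assoc x y w⟩
  have hxy : x * y ≠ z := (h6 x y).2 ⟨hx, hy, hd⟩
  exact ⟨l_mul_of_mul_ne h1 h3 h6 hxy, r_mul_of_mul_ne h2 h4 h6 hxy⟩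

theorem stmt19 {S : Type*} [Semigroup S] (z : S) (l r : S → S)
    (h1 : ∀ x : S, r (l x) = l x) (h2 : ∀ x : S, l (r x) = r x)
    (h3 : ∀ x : S, l x * x = x) (h4 : ∀ x : S, x * r x = x)
    (h5 : r z = z)
    (h6 : ∀ x y : S, x * y ≠ z ↔ x ≠ z ∧ y ≠ z ∧ r x = l y) :
    (∀ x : S, x ≠ z →
      l x ≠ z ∧ r x ≠ z ∧ r (l x) = l x ∧ l (r x) = r x ∧
      l x * x = x ∧ x * r x = x) ∧
    (∀ x y : S, x ≠ z → y ≠ z → (x * y ≠ z ↔ r x = l y)) ∧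
    (∀ x y : S, x ≠ z → y ≠ z → r x = l y →
      l (x * y) = l x ∧ r (x * y) = r y) ∧
    (∀ x y w : S, x ≠ z → y ≠ z → w ≠ z → r x = l y → r y = l w →
      (x * y) * w = x * (y * w)) :=
  stmt19_general z l r h1 h2 h3 h4 h6
end
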